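/- For density matrices ρ_A of size d_A and ρ_B of size d_B with Bloch vectors α = (α_{ij}) and β = (β_{kl}) (α_{ij} = Tr(W_{ij}^† ρ_A), β_{kl} = Tr(W_{kl}^† ρ_B)), the correlation matrix of the product state ρ_A ⊗ ρ_B equals the rank-one matrix α·βᵗ, and its Ky Fan norm satisfies ‖α·βᵗ‖_KF = |α|·|β| ≤ √((d_A − 1)(d_B − 1)). -/

import Mathlib

open scoped Matrix ComplexOrder Kronecker

/-- The Weyl operator `W_{n m}` on a `d`-dimensional Hilbert space:
`(W_{n m})_{k, k'} = exp(2πi·k·n/d)` if `k' = k + m` (mod `d`), and `0` otherwise. -/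
noncomputable def Weyl (d : ℕ) (n m : ZMod d) : Matrix (ZMod d) (ZMod d) ℂ :=
  Matrix.of fun k k' =>
    if k' = k + m then Complex.exp (2 * Real.pi * Complex.I * (k.val * n.val : ℕ) / d) else 0

/-- The positive semidefinite square root of a positive semidefinite matrix
(the definition of `Matrix.PosSemidef.sqrt` in the older Mathlib, since removed). -/
noncomputable def Matrix.PosSemidef.sqrt {n 𝕜 : Type*} [Fintype n] [DecidableEq n] [RCLike 𝕜]
    {A : Matrix n n 𝕜} (hA : A.PosSemidef) : Matrix n n 𝕜 :=
  (hA.1.eigenvectorUnitary : Matrix n n 𝕜) *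
    Matrix.diagonal (((↑) : ℝ → 𝕜) ∘ Real.sqrt ∘ hA.1.eigenvalues) *
    (star hA.1.eigenvectorUnitary : Matrix n n 𝕜)

/-- The Ky Fan (trace) norm `‖M‖_KF = Tr √(M†M)`, the sum of the singular values of `M`. -/
noncomputable def kyFanNorm {m n : Type*} [Fintype m] [Fintype n] [DecidableEq n]
    (M : Matrix m n ℂ) : ℝ :=
  (Matrix.trace (Matrix.posSemidef_conjTranspose_mul_self M).sqrt).re

/-- The correlation matrix of a bipartite state relative to the Weyl basis:
`M_{(i,j),(k,l)} = Tr(ρ · (W_{ij}^† ⊗ W_{kl}^†))` for `(i,j) ≠ 0`, `(k,l) ≠ 0`. -/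
noncomputable def corrMatrix (dA dB : ℕ) [NeZero dA] [NeZero dB]
    (ρ : Matrix (ZMod dA × ZMod dB) (ZMod dA × ZMod dB) ℂ) :
    Matrix {p : ZMod dA × ZMod dA // p ≠ 0} {q : ZMod dB × ZMod dB // q ≠ 0} ℂ :=
  Matrix.of fun p q =>
    Matrix.trace (ρ * ((Weyl dA p.1.1 p.1.2)ᴴ ⊗ₖ (Weyl dB q.1.1 q.1.2)ᴴ))

/-!
For a product state the trace against `W ⊗ W'` factors, so the correlation matrix is the rank-one
matrix `α βᵗ`, whose only nonzero singular value is `|α| |β|`. For the bound: for fixed `m`,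
`n ↦ Tr(W_{nm}^† ρ)` is the discrete Fourier transform of the cyclic diagonal `j ↦ ρ_{j,j+m}`, so
Parseval gives `∑_{n,m} |Tr(W_{nm}^† ρ)|² = d ∑ |ρ_{jk}|²`. The `2 × 2` principal minors of a
density matrix give `|ρ_{jk}|² ≤ ρ_{jj} ρ_{kk}`, so `∑ |ρ_{jk}|² ≤ (Tr ρ)² = 1`; the term
`W_{00} = 1` contributes `|Tr ρ|² = 1`, leaving `|α|² ≤ d - 1`.
-/

open Matrix ZMod ComplexConjugate

namespace Matrix.PosSemidef

variable {n 𝕜 : Type*} [RCLike 𝕜] {A : Matrix n n 𝕜}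

theorem norm_sq_apply_le (hA : A.PosSemidef) (i j : n) :
    ‖A i j‖ ^ 2 ≤ RCLike.re (A i i) * RCLike.re (A j j) := by
  have h := (hA.submatrix ![i, j]).det_nonneg
  rw [det_fin_two] at h
  simp only [submatrix_apply, Matrix.cons_val_zero, Matrix.cons_val_one] at h
  rw [← hA.1.coe_re_apply_self i, ← hA.1.coe_re_apply_self j, ← hA.1.apply j i, RCLike.star_def,
    RCLike.mul_conj] at h
  exact sub_nonneg.1 (by exact_mod_cast h)

variable [Fintype n]

theorem sum_norm_sq_apply_le (hA : A.PosSemidef) :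
    ∑ i, ∑ j, ‖A i j‖ ^ 2 ≤ RCLike.re A.trace ^ 2 := calc
  _ ≤ ∑ i, ∑ j, RCLike.re (A i i) * RCLike.re (A j j) :=
    Finset.sum_le_sum fun i _ => Finset.sum_le_sum fun j _ => hA.norm_sq_apply_le i j
  _ = RCLike.re A.trace ^ 2 := by
    rw [sq, trace, map_sum, Finset.sum_mul_sum]
    rfl

variable [DecidableEq n]

open scoped MatrixOrder in
theorem sqrt_eq_cfcSqrt (hA : A.PosSemidef) : hA.sqrt = CFC.sqrt A := by
  rw [CFC.sqrt_eq_cfc, cfc_nnreal_eq_real _ A, hA.1.cfc_eq, IsHermitian.cfc, PosSemidef.sqrt]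
  simp only [Unitary.conjStarAlgAut_apply]
  congr 4
  funext i
  simp [hA.eigenvalues_nonneg i]

open scoped MatrixOrder in
theorem sqrt_eq_of_mul_self_eq (hA : A.PosSemidef) {B : Matrix n n 𝕜} (hB : B.PosSemidef)
    (h : B * B = A) : hA.sqrt = B := by
  rw [sqrt_eq_cfcSqrt]
  exact CFC.sqrt_unique h hB.nonneg

end Matrix.PosSemidef

theorem star_dotProduct_self {n 𝕜 : Type*} [Fintype n] [RCLike 𝕜] (a : n → 𝕜) :
    star a ⬝ᵥ a = ((∑ i, ‖a i‖ ^ 2 : ℝ) : 𝕜) := by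
  simp [dotProduct, RCLike.conj_mul]

section KyFan

variable {P Q : Type*} [Fintype P] [Fintype Q] [DecidableEq Q]

theorem kyFanNorm_zero : kyFanNorm (0 : Matrix P Q ℂ) = 0 := by
  rw [kyFanNorm, PosSemidef.sqrt_eq_of_mul_self_eq _ PosSemidef.zero (by simp)]
  simp

theorem kyFanNorm_vecMulVec (a : P → ℂ) (b : Q → ℂ) :
    kyFanNorm (vecMulVec a b) = √(∑ p, ‖a p‖ ^ 2) * √(∑ q, ‖b q‖ ^ 2) := by
  set c := ∑ p, ‖a p‖ ^ 2
  set t := ∑ q, ‖b q‖ ^ 2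
  have hc : star a ⬝ᵥ a = (c : ℂ) := star_dotProduct_self a
  have ht : star b ⬝ᵥ b = (t : ℂ) := star_dotProduct_self b
  by_cases ht0 : t = 0
  · have hb : b = 0 := dotProduct_star_self_eq_zero.1 (by rw [ht, ht0, Complex.ofReal_zero])
    have hab : vecMulVec a b = 0 := by ext; simp [vecMulVec_apply, hb]
    rw [hab, kyFanNorm_zero, ht0, Real.sqrt_zero, mul_zero]
  have hsqrt_t : 0 < √t := Real.sqrt_pos.2 (lt_of_le_of_ne (by positivity) (Ne.symm ht0))
  -- `V = b̄ bᵀ` satisfies `V² = t V`, so `√(c V) = (√c / √t) V`.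
  set V := vecMulVec (star b) b
  have hV : V * V = (t : ℂ) • V := by
    rw [vecMulVec_mul_vecMulVec, dotProduct_comm, ht, vecMulVec_smul]
  have hMM : (vecMulVec a b)ᴴ * vecMulVec a b = (c : ℂ) • V := by
    rw [conjTranspose_vecMulVec, vecMulVec_mul_vecMulVec, hc, vecMulVec_smul]
  have hS : (posSemidef_conjTranspose_mul_self (vecMulVec a b)).sqrt =
      ((√c / √t : ℝ) : ℂ) • V := by
    refine PosSemidef.sqrt_eq_of_mul_self_eq _ ?_ ?_
    · exact (posSemidef_vecMulVec_star_self b).smul (by positivity)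
    · rw [smul_mul_smul_comm, hV, smul_smul, hMM]
      congr 1
      norm_cast
      field_simp
      rw [Real.sq_sqrt (by positivity), Real.sq_sqrt (by positivity), mul_comm]
  rw [kyFanNorm, hS, trace_smul, trace_vecMulVec, ht, smul_eq_mul,
    ← Complex.ofReal_mul, Complex.ofReal_re]
  field_simp
  rw [Real.sq_sqrt (by positivity)]

end KyFan

theorem ZMod.sum_conj_stdAddChar_mul_stdAddChar {N : ℕ} [NeZero N] (j j' : ZMod N) :
    ∑ k, conj (stdAddChar (-(j * k)) : ℂ) * stdAddChar (-(j' * k)) =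
      if j = j' then (N : ℂ) else 0 := by
  have h : ∀ k, -(-(j * k)) + -(j' * k) = k * (j - j') := fun k => by ring
  simp_rw [← AddChar.map_neg_eq_conj, ← AddChar.map_add_eq_mul, h,
    AddChar.sum_mulShift _ (isPrimitive_stdAddChar N), sub_eq_zero, ZMod.card, Nat.cast_ite,
    Nat.cast_zero]

theorem ZMod.sum_norm_sq_dft {N : ℕ} [NeZero N] (Φ : ZMod N → ℂ) :
    ∑ k, ‖𝓕 Φ k‖ ^ 2 = N * ∑ j, ‖Φ j‖ ^ 2 := by
  have h : ∑ k, conj (𝓕 Φ k) * 𝓕 Φ k = N * ∑ j, conj (Φ j) * Φ j := calc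
    _ = ∑ j, ∑ j', conj (Φ j) * Φ j' *
          ∑ k, conj (stdAddChar (-(j * k)) : ℂ) * stdAddChar (-(j' * k)) := by
      simp_rw [dft_apply, smul_eq_mul, map_sum, Finset.sum_mul_sum, Finset.mul_sum, map_mul]
      rw [Finset.sum_comm]
      refine Finset.sum_congr rfl fun j _ => ?_
      rw [Finset.sum_comm]
      exact Finset.sum_congr rfl fun j' _ => Finset.sum_congr rfl fun k _ => by ring
    _ = N * ∑ j, conj (Φ j) * Φ j := by
      simp_rw [ZMod.sum_conj_stdAddChar_mul_stdAddChar, mul_ite, mul_zero, Finset.sum_ite_eq,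
        Finset.mem_univ, if_true, Finset.mul_sum, mul_comm]
  simp_rw [RCLike.conj_mul] at h
  apply Complex.ofReal_injective
  push_cast
  exact h

theorem Weyl_apply (d : ℕ) [NeZero d] (n m k k' : ZMod d) :
    Weyl d n m k k' = if k' = k + m then (stdAddChar (k * n) : ℂ) else 0 := by
  have h : k * n = ((k.val * n.val : ℕ) : ZMod d) := by push_cast; simp
  rw [Weyl, of_apply, h, stdAddChar_apply, toCircle_natCast]

theorem trace_conjTranspose_Weyl_mul (d : ℕ) [NeZero d] (n m : ZMod d)
    (X : Matrix (ZMod d) (ZMod d) ℂ) :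
    ((Weyl d n m)ᴴ * X).trace = 𝓕 (fun k => X k (k + m)) n := by
  simp only [trace, diag, mul_apply, conjTranspose_apply, Weyl_apply, dft_apply]
  rw [Finset.sum_comm]
  refine Finset.sum_congr rfl fun j _ => ?_
  simp [apply_ite, ← AddChar.map_neg_eq_conj]

theorem sum_norm_sq_trace_Weyl_mul (d : ℕ) [NeZero d] (X : Matrix (ZMod d) (ZMod d) ℂ) :
    ∑ p : ZMod d × ZMod d, ‖((Weyl d p.1 p.2)ᴴ * X).trace‖ ^ 2 = d * ∑ j, ∑ k, ‖X j k‖ ^ 2 := by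
  simp_rw [trace_conjTranspose_Weyl_mul, Fintype.sum_prod_type]
  rw [Finset.sum_comm]
  simp_rw [ZMod.sum_norm_sq_dft, ← Finset.mul_sum]
  rw [Finset.sum_comm]
  congr 1
  exact Finset.sum_congr rfl fun j _ => Equiv.sum_comp (Equiv.addLeft j) fun k => ‖X j k‖ ^ 2

theorem Weyl_zero_zero (d : ℕ) [NeZero d] : Weyl d 0 0 = 1 := by
  ext k k'
  simp [Weyl_apply, one_apply, eq_comm]

theorem sum_ne_zero_norm_sq_trace_Weyl_mul_le (d : ℕ) [NeZero d] {ρ : Matrix (ZMod d) (ZMod d) ℂ}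
    (hρ : ρ.PosSemidef) (htr : ρ.trace = 1) :
    ∑ p : {p : ZMod d × ZMod d // p ≠ 0}, ‖((Weyl d p.1.1 p.1.2)ᴴ * ρ).trace‖ ^ 2 ≤ d - 1 := by
  have hfull := sum_norm_sq_trace_Weyl_mul d ρ
  rw [Fintype.sum_eq_add_sum_subtype_ne _ 0] at hfull
  have hpurity := hρ.sum_norm_sq_apply_le
  simp only [Prod.fst_zero, Prod.snd_zero, Weyl_zero_zero, conjTranspose_one, one_mul, htr,
    norm_one, one_pow, RCLike.one_re] at hfull hpurity
  have hd : (d : ℝ) * ∑ j, ∑ k, ‖ρ j k‖ ^ 2 ≤ d := mul_le_of_le_one_right (by positivity) hpurity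
  linarith

theorem corrMatrix_kronecker (dA dB : ℕ) [NeZero dA] [NeZero dB]
    (ρA : Matrix (ZMod dA) (ZMod dA) ℂ) (ρB : Matrix (ZMod dB) (ZMod dB) ℂ) :
    corrMatrix dA dB (ρA ⊗ₖ ρB) =
      vecMulVec (fun p : {p : ZMod dA × ZMod dA // p ≠ 0} => ((Weyl dA p.1.1 p.1.2)ᴴ * ρA).trace)
        (fun q : {q : ZMod dB × ZMod dB // q ≠ 0} => ((Weyl dB q.1.1 q.1.2)ᴴ * ρB).trace) := by
  ext p q
  rw [corrMatrix, of_apply, vecMulVec_apply, ← mul_kronecker_mul, trace_kronecker,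
    trace_mul_comm ρA, trace_mul_comm ρB]

theorem corr_of_product_state_general (dA dB : ℕ) [NeZero dA] [NeZero dB]
    (ρA : Matrix (ZMod dA) (ZMod dA) ℂ) (hApsd : ρA.PosSemidef) (hAtr : ρA.trace = 1)
    (ρB : Matrix (ZMod dB) (ZMod dB) ℂ) (hBpsd : ρB.PosSemidef) (hBtr : ρB.trace = 1) :
    corrMatrix dA dB (ρA ⊗ₖ ρB) =
      Matrix.of (fun (p : {p : ZMod dA × ZMod dA // p ≠ 0}) (q : {q : ZMod dB × ZMod dB // q ≠ 0}) =>
        Matrix.trace ((Weyl dA p.1.1 p.1.2)ᴴ * ρA) * Matrix.trace ((Weyl dB q.1.1 q.1.2)ᴴ * ρB)) ∧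
    kyFanNorm (corrMatrix dA dB (ρA ⊗ₖ ρB)) =
      Real.sqrt (∑ p : {p : ZMod dA × ZMod dA // p ≠ 0},
          ‖Matrix.trace ((Weyl dA p.1.1 p.1.2)ᴴ * ρA)‖ ^ 2) *
        Real.sqrt (∑ q : {q : ZMod dB × ZMod dB // q ≠ 0},
          ‖Matrix.trace ((Weyl dB q.1.1 q.1.2)ᴴ * ρB)‖ ^ 2) ∧
    kyFanNorm (corrMatrix dA dB (ρA ⊗ₖ ρB)) ≤ Real.sqrt (((dA : ℝ) - 1) * ((dB : ℝ) - 1)) := by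
  have hcorr := corrMatrix_kronecker dA dB ρA ρB
  have hKF := hcorr.symm ▸ kyFanNorm_vecMulVec _ _
  refine ⟨hcorr, hKF, ?_⟩
  have hA := sum_ne_zero_norm_sq_trace_Weyl_mul_le dA hApsd hAtr
  have hB := sum_ne_zero_norm_sq_trace_Weyl_mul_le dB hBpsd hBtr
  rw [hKF, Real.sqrt_mul ((Finset.sum_nonneg fun _ _ => by positivity).trans hA)]
  gcongr

/-- the correlation matrix of a product state `ρ_A ⊗ ρ_B` is the rank-one
matrix `α βᵗ` built from the Bloch vectors, and its Ky Fan norm equals `|α|·|β|`, which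
is at most `√((d_A − 1)(d_B − 1))`. -/
theorem corr_of_product_state (dA dB : ℕ) [NeZero dA] [NeZero dB]
    (hA : 2 ≤ dA) (hB : 2 ≤ dB)
    (ρA : Matrix (ZMod dA) (ZMod dA) ℂ) (hApsd : ρA.PosSemidef) (hAtr : ρA.trace = 1)
    (ρB : Matrix (ZMod dB) (ZMod dB) ℂ) (hBpsd : ρB.PosSemidef) (hBtr : ρB.trace = 1) :
    corrMatrix dA dB (ρA ⊗ₖ ρB) =
      Matrix.of (fun (p : {p : ZMod dA × ZMod dA // p ≠ 0}) (q : {q : ZMod dB × ZMod dB // q ≠ 0}) =>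
        Matrix.trace ((Weyl dA p.1.1 p.1.2)ᴴ * ρA) * Matrix.trace ((Weyl dB q.1.1 q.1.2)ᴴ * ρB)) ∧
    kyFanNorm (corrMatrix dA dB (ρA ⊗ₖ ρB)) =
      Real.sqrt (∑ p : {p : ZMod dA × ZMod dA // p ≠ 0},
          ‖Matrix.trace ((Weyl dA p.1.1 p.1.2)ᴴ * ρA)‖ ^ 2) *
        Real.sqrt (∑ q : {q : ZMod dB × ZMod dB // q ≠ 0},
          ‖Matrix.trace ((Weyl dB q.1.1 q.1.2)ᴴ * ρB)‖ ^ 2) ∧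
    kyFanNorm (corrMatrix dA dB (ρA ⊗ₖ ρB)) ≤ Real.sqrt (((dA : ℝ) - 1) * ((dB : ℝ) - 1)) :=
  corr_of_product_state_general dA dB ρA hApsd hAtr ρB hBpsd hBtr
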